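/- Let T be a metrisable topological space, C ⊆ T a closed subset, and suppose every metric on C compatible with the subspace topology extends (with arbitrarily small sup-norm change relative to a given compatible metric on T restricted to C) to a compatible metric on T. If B ⊆ M^C is residual in M^C, then the set U = {d ∈ M^T : d restricted to C×C belongs to B} is residual in M^T. -/
import Mathlib


/-- A metric `d` on a topological space is compatible if it satisfies the metric
axioms and generates the topology. -/
def IsCompatMetric {X : Type*} [TopologicalSpace X] (d : X → X → ℝ) : Prop :=
  (∀ x y, d x y = d y x) ∧ (∀ x y, d x y = 0 ↔ x = y) ∧
  (∀ x y z, d x z ≤ d x y + d y z) ∧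
  (∀ s : Set X, IsOpen s ↔ ∀ x ∈ s, ∃ ε > 0, {y | d x y < ε} ⊆ s)

/-- The space of compatible metrics on `X`, inside the space of functions on `X × X`
with the topology of uniform convergence. -/
def Mspace (X : Type*) [TopologicalSpace X] : Set (UniformFun (X × X) ℝ) :=
  {f | IsCompatMetric fun x y => UniformFun.toFun f (x, y)}

/-- The restriction of a metric on `T` to a subset `C`. -/
def restr {T : Type*} (C : Set T) (d : UniformFun (T × T) ℝ) : UniformFun (C × C) ℝ :=
  UniformFun.ofFun fun p => UniformFun.toFun d (↑p.1, ↑p.2)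

/-- Balls of a compatible metric are open. -/
lemma isOpen_ball_of_compat {X : Type*} [TopologicalSpace X] {d : X → X → ℝ}
    (hd : IsCompatMetric d) (x : X) (ε : ℝ) : IsOpen {y | d x y < ε} := by
  obtain ⟨hsymm, hzero, htri, htop⟩ := hd
  rw [htop]
  intro y hy
  refine ⟨ε - d x y, by simpa using hy, fun z hz => ?_⟩
  have := htri x y z
  simp only [Set.mem_setOf_eq] at hz ⊢
  linarith

/-- The restriction of a compatible metric to a subset is compatible with the
subspace topology. -/
lemma restr_mem_Mspace {T : Type*} [TopologicalSpace T] (C : Set T)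
    {d : UniformFun (T × T) ℝ} (hd : d ∈ Mspace T) : restr C d ∈ Mspace C := by
  obtain ⟨hsymm, hzero, htri, htop⟩ := hd
  refine ⟨fun x y => hsymm x y, fun x y => ?_, fun x y z => htri x y z, fun s => ?_⟩
  · exact ⟨fun h => Subtype.ext ((hzero x.val y.val).1 h),
      fun h => (hzero x.val y.val).2 (by rw [h])⟩
  · constructor
    · intro hs x hx
      rw [isOpen_induced_iff] at hs
      obtain ⟨t, ht, rfl⟩ := hs
      obtain ⟨ε, hε, hball⟩ := (htop t).1 ht x.val hx
      exact ⟨ε, hε, fun y hy => hball hy⟩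
    · intro h
      rw [isOpen_induced_iff]
      choose ε hε hball using h
      classical
      refine ⟨⋃ (x : C) (hx : x ∈ s), {y | UniformFun.toFun d (x.val, y) < ε x hx}, ?_, ?_⟩
      · exact isOpen_iUnion fun x => isOpen_iUnion fun hx =>
          isOpen_ball_of_compat ⟨hsymm, hzero, htri, htop⟩ x.val (ε x hx)
      · ext y
        simp only [Set.mem_preimage, Set.mem_iUnion]
        constructor
        · rintro ⟨x, hx, hxy⟩
          exact hball x hx hxy
        · intro hy
          refine ⟨y, hy, ?_⟩
          simp only [Set.mem_setOf_eq]
          have : UniformFun.toFun d (y.val, y.val) = 0 := (hzero _ _).2 rfl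
          rw [this]
          exact hε y hy

/-- The restriction map between metric spaces. -/
noncomputable def rho {T : Type*} [TopologicalSpace T] (C : Set T) :
    ↥(Mspace T) → ↥(Mspace C) :=
  fun d => ⟨restr C d.1, restr_mem_Mspace C d.2⟩

lemma rho_continuous {T : Type*} [TopologicalSpace T] (C : Set T) :
    Continuous (rho C) := by
  apply Continuous.subtype_mk
  have : Continuous (fun f : UniformFun (T × T) ℝ =>
      UniformFun.ofFun (UniformFun.toFun f ∘ (fun p : C × C => ((p.1 : T), (p.2 : T))))) :=
    UniformFun.precomp_uniformContinuous.continuous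
  exact this.comp continuous_subtype_val

lemma isGδ_preimage {X Y : Type*} [TopologicalSpace X] [TopologicalSpace Y]
    {f : X → Y} (hf : Continuous f) {s : Set Y} (hs : IsGδ s) : IsGδ (f ⁻¹' s) := by
  obtain ⟨g, hgo, rfl⟩ := isGδ_iff_eq_iInter_nat.1 hs
  rw [Set.preimage_iInter]
  exact IsGδ.iInter_of_isOpen fun n => (hgo n).preimage hf

/-- If every compatible metric on the closed set `C` extends to `T` with no larger
sup-distance to a given compatible metric on `T`, and `B` is residual in `M^C`, then
`{d ∈ M^T : d|_{C×C} ∈ B}` is residual in `M^T`. -/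
theorem stmt12 {T : Type*} [TopologicalSpace T] [TopologicalSpace.MetrizableSpace T]
    (C : Set T) (hC : IsClosed C)
    (hext : ∀ d ∈ Mspace T, ∀ e ∈ Mspace C, ∃ ebar ∈ Mspace T,
      (∀ p : C × C, UniformFun.toFun ebar (↑p.1, ↑p.2) = UniformFun.toFun e p) ∧
      ∀ ε : ℝ, (∀ p : C × C,
          |UniformFun.toFun e p - UniformFun.toFun d (↑p.1, ↑p.2)| ≤ ε) →
        ∀ q : T × T, |UniformFun.toFun ebar q - UniformFun.toFun d q| ≤ ε)
    (B : Set ↥(Mspace C)) (hB : B ∈ residual ↥(Mspace C)) :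
    {d : ↥(Mspace T) | ∃ hr : restr C d.1 ∈ Mspace C,
      (⟨restr C d.1, hr⟩ : ↥(Mspace C)) ∈ B} ∈ residual ↥(Mspace T) := by
  have hdense : ∀ A : Set ↥(Mspace C), Dense A → Dense (rho C ⁻¹' A) := by
    intro A hA
    rw [dense_iff_inter_open]
    rintro U hU ⟨d, hdU⟩
    rw [isOpen_induced_iff] at hU
    obtain ⟨O, hO, rfl⟩ := hU
    have hnhds : O ∈ nhds (d : UniformFun (T × T) ℝ) := hO.mem_nhds hdU
    obtain ⟨ε, hε, hball⟩ := (UniformFun.hasBasis_nhds_of_basis (T × T) ℝ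
      (d : UniformFun (T × T) ℝ) Metric.uniformity_basis_dist).mem_iff.1 hnhds
    have hcl := mem_closure_iff_nhds.1 (hA (rho C d))
    have hN : (Subtype.val ⁻¹' {g | ((rho C d).1, g) ∈
        UniformFun.gen (C × C) ℝ {p | dist p.1 p.2 < ε / 2}} : Set ↥(Mspace C)) ∈
        nhds (rho C d) := by
      apply ContinuousAt.preimage_mem_nhds continuous_subtype_val.continuousAt
      exact (UniformFun.hasBasis_nhds_of_basis (C × C) ℝ
        (rho C d).1 Metric.uniformity_basis_dist).mem_of_mem (by positivity)
    obtain ⟨e, heN, heA⟩ := hcl _ hN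
    have hclose : ∀ p : C × C,
        |UniformFun.toFun (e : UniformFun (C × C) ℝ) p -
          UniformFun.toFun (d : UniformFun (T × T) ℝ) (↑p.1, ↑p.2)| ≤ ε / 2 := by
      intro p
      have h1 : dist (UniformFun.toFun (rho C d).1 p)
          (UniformFun.toFun (e : UniformFun (C × C) ℝ) p) < ε / 2 := heN p
      rw [Real.dist_eq] at h1
      rw [abs_sub_comm]
      exact le_of_lt h1
    obtain ⟨ebar, hebar, hres, hbound⟩ := hext d.1 d.2 e.1 e.2
    have hclose2 := hbound (ε / 2) hclose
    refine ⟨⟨ebar, hebar⟩, ?_, ?_⟩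
    · apply hball
      intro q
      have := hclose2 q
      show dist (UniformFun.toFun (d : UniformFun (T × T) ℝ) q) (UniformFun.toFun ebar q) < ε
      rw [Real.dist_eq, abs_sub_comm]
      linarith [abs_nonneg (UniformFun.toFun ebar q - UniformFun.toFun (d : UniformFun (T × T) ℝ) q)]
    · have hrho : rho C (⟨ebar, hebar⟩ : ↥(Mspace T)) = e := by
        apply Subtype.ext
        show restr C ebar = e.1
        have h2 : (fun p : C × C => UniformFun.toFun ebar (↑p.1, ↑p.2)) =
            UniformFun.toFun (e : UniformFun (C × C) ℝ) := funext hres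
        rw [restr, h2, UniformFun.ofFun_toFun]
      show rho C _ ∈ A
      rw [hrho]
      exact heA
  rw [mem_residual_iff] at hB ⊢
  obtain ⟨S, hSo, hSd, hScnt, hSsub⟩ := hB
  refine ⟨(fun s => rho C ⁻¹' s) '' S, ?_, ?_, hScnt.image _, ?_⟩
  · rintro _ ⟨s, hs, rfl⟩
    exact (hSo s hs).preimage (rho_continuous C)
  · rintro _ ⟨s, hs, rfl⟩
    exact hdense s (hSd s hs)
  · intro d hd
    have hmem : rho C d ∈ ⋂₀ S := by
      intro s hs
      exact hd _ ⟨s, hs, rfl⟩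
    exact ⟨restr_mem_Mspace C d.2, hSsub hmem⟩
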